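/- Every subtree (connected subgraph) of a Markov tree, with the labeling inherited from the original tree, is itself a Markov tree. -/

import Mathlib

open scoped NNReal

/-- A family of compatible frames (f.c.f.): a collection of finite nonempty frames
together with (unique) refinings between them, closed under composition, containing
identities, with minimal common refinements (binary joins). -/
structure FCF where
  /-- the frames of the family -/
  Frame : Type
  /-- the elements of each frame -/
  El : Frame → Type
  elFintype : ∀ Θ, Fintype (El Θ)
  elNonempty : ∀ Θ, Nonempty (El Θ)
  /-- `le Θ Λ` holds iff the family contains a refining of `Θ` to `Λ`. -/
  le : Frame → Frame → Prop
  le_refl : ∀ Θ, le Θ Θ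
  le_trans : ∀ {Θ Λ Ξ}, le Θ Λ → le Λ Ξ → le Θ Ξ
  le_antisymm : ∀ {Θ Λ}, le Θ Λ → le Λ Θ → Θ = Λ
  /-- the (unique) refining map of `Θ` to `Λ`, when `le Θ Λ` -/
  τ : ∀ {Θ Λ}, le Θ Λ → El Θ → Set (El Λ)
  τ_nonempty : ∀ {Θ Λ} (h : le Θ Λ) (θ : El Θ), (τ h θ).Nonempty
  τ_disjoint : ∀ {Θ Λ} (h : le Θ Λ) (θ θ' : El Θ), θ ≠ θ' → τ h θ ∩ τ h θ' = ∅
  τ_cover : ∀ {Θ Λ} (h : le Θ Λ) (x : El Λ), ∃ θ, x ∈ τ h θ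
  /-- the identity refining -/
  τ_refl : ∀ {Θ} (h : le Θ Θ) (θ : El Θ), τ h θ = {θ}
  /-- closure under composition of refinings -/
  τ_comp : ∀ {Θ Λ Ξ} (h₁ : le Θ Λ) (h₂ : le Λ Ξ) (h₃ : le Θ Ξ) (θ : El Θ),
    τ h₃ θ = ⋃ lam ∈ τ h₁ θ, τ h₂ lam
  /-- identity of coarsenings: two coarsenings of a frame with the same blocks coincide -/
  coarsening_unique : ∀ {Θ₁ Θ₂ Λ} (h₁ : le Θ₁ Λ) (h₂ : le Θ₂ Λ),
    (∀ θ₁, ∃ θ₂, τ h₁ θ₁ = τ h₂ θ₂) → (∀ θ₂, ∃ θ₁, τ h₁ θ₁ = τ h₂ θ₂) → Θ₁ = Θ₂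
  /-- minimal common refinement of two frames -/
  sup : Frame → Frame → Frame
  le_sup_left : ∀ Θ Λ, le Θ (sup Θ Λ)
  le_sup_right : ∀ Θ Λ, le Λ (sup Θ Λ)
  sup_le : ∀ {Θ Λ Ξ}, le Θ Ξ → le Λ Ξ → le (sup Θ Λ) Ξ
  /-- every element of the minimal common refinement is the (unique) intersection point
  of a block of each factor -/
  sup_atom : ∀ {Θ Λ} (h₁ : le Θ (sup Θ Λ)) (h₂ : le Λ (sup Θ Λ)) (x : El (sup Θ Λ)),
    ∃ (θ : El Θ) (lam : El Λ), τ h₁ θ ∩ τ h₂ lam = {x}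

namespace FCF

instance (F : FCF) (Θ : F.Frame) : Fintype (F.El Θ) := F.elFintype Θ

instance (F : FCF) (Θ : F.Frame) : Nonempty (F.El Θ) := F.elNonempty Θ

instance instSemilatticeSup (F : FCF) : SemilatticeSup F.Frame where
  le := F.le
  le_refl := F.le_refl
  le_trans := fun _ _ _ => F.le_trans
  le_antisymm := fun _ _ => F.le_antisymm
  sup := F.sup
  le_sup_left := F.le_sup_left
  le_sup_right := F.le_sup_right
  sup_le := fun _ _ _ h h' => F.sup_le h h'

/-- the indicator potential `f_p` of the support of a potential -/
noncomputable def fpot {X : Type} (p : X → ℝ≥0) : X → ℝ≥0 := fun x =>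
  haveI := Classical.propDecidable (0 < p x)
  if 0 < p x then 1 else 0

/-- the support of a potential -/
def psupp {X : Type} (p : X → ℝ≥0) : Set X := {x | 0 < p x}

/-- the likelihood (plausibility of singletons) function of a set potential -/
noncomputable def plfn {X : Type} (m : Set X → ℝ≥0) : X → ℝ≥0 :=
  fun x => ∑ᶠ (S : Set X) (_ : x ∈ S), m S

variable (F : FCF)

/-- `θ` and `lam` are compatible: their refinings to the minimal common refinement
of the two frames intersect. -/
def compat {Θ Λ : F.Frame} (θ : F.El Θ) (lam : F.El Λ) : Prop :=
  (F.τ (F.le_sup_left Θ Λ) θ ∩ F.τ (F.le_sup_right Θ Λ) lam).Nonempty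

/-- `(θ₁, θ₂, lam) ∈ R(Θ₁, Θ₂, Λ)`: joint compatibility of a triple. -/
def compat3 {Θ₁ Θ₂ Λ : F.Frame} (θ₁ : F.El Θ₁) (θ₂ : F.El Θ₂) (lam : F.El Λ) : Prop :=
  (F.τ (F.le_trans (F.le_sup_left Θ₁ Θ₂) (F.le_sup_left (F.sup Θ₁ Θ₂) Λ)) θ₁ ∩
    F.τ (F.le_trans (F.le_sup_right Θ₁ Θ₂) (F.le_sup_left (F.sup Θ₁ Θ₂) Λ)) θ₂ ∩
    F.τ (F.le_sup_right (F.sup Θ₁ Θ₂) Λ) lam).Nonempty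

/-- `Θ₁ ⊥ Θ₂ | Λ` : conditional independence of two frames given a third,
`R_λ(Θ₁,Θ₂) = R_λ(Θ₁) × R_λ(Θ₂)` for every `λ ∈ Λ`. -/
def CondIndep (Θ₁ Θ₂ Λ : F.Frame) : Prop :=
  ∀ (lam : F.El Λ) (θ₁ : F.El Θ₁) (θ₂ : F.El Θ₂),
    F.compat3 θ₁ θ₂ lam ↔ (F.compat θ₁ lam ∧ F.compat θ₂ lam)

/-- joint compatibility of a family of elements together with `lam`. -/
def compatFam {ι : Type} {Θ : ι → F.Frame} {Λ : F.Frame}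
    (θ : ∀ i, F.El (Θ i)) (lam : F.El Λ) : Prop :=
  ∃ (Ξ : F.Frame) (hΘ : ∀ i, F.le (Θ i) Ξ) (hΛ : F.le Λ Ξ) (x : F.El Ξ),
    (∀ i, x ∈ F.τ (hΘ i) (θ i)) ∧ x ∈ F.τ hΛ lam

/-- `⊥ {Θ_i : i ∈ ι} | Λ` : conditional independence of a family of frames given `Λ`,
`R_λ(Θ₁,…,Θₙ) = R_λ(Θ₁) × ⋯ × R_λ(Θₙ)` for every `λ ∈ Λ`. -/
def CondIndepFam {ι : Type} (Θ : ι → F.Frame) (Λ : F.Frame) : Prop :=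
  ∀ (lam : F.El Λ) (θ : ∀ i, F.El (Θ i)),
    F.compatFam θ lam ↔ ∀ i, F.compat (θ i) lam

/-- `t_Λ(x)`, the unique element of the coarsening `Λ` whose block contains `x`. -/
noncomputable def proj {Λ Θ : F.Frame} (h : F.le Λ Θ) (x : F.El Θ) : F.El Λ :=
  (F.τ_cover h x).choose

/-- probability potentials on the frame `Θ` -/
abbrev Pot (Θ : F.Frame) : Type := F.El Θ → ℝ≥0

/-- the combination of two probability potentials, on the join of their domains -/
noncomputable def combine {Θ₁ Θ₂ : F.Frame} (p₁ : F.Pot Θ₁) (p₂ : F.Pot Θ₂) :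
    F.Pot (F.sup Θ₁ Θ₂) :=
  fun x => p₁ (F.proj (F.le_sup_left Θ₁ Θ₂) x) * p₂ (F.proj (F.le_sup_right Θ₁ Θ₂) x)

/-- the transport `π_Λ(p)` of a probability potential to the frame `Λ` -/
noncomputable def transport {Θ : F.Frame} (p : F.Pot Θ) (Λ : F.Frame) : F.Pot Λ :=
  fun lam => ∑ᶠ (θ : F.El Θ) (_ : F.compat θ lam), p θ

/-- the max-transport `t^max_Λ(p)` of a probability potential to the frame `Λ` -/
noncomputable def maxTransport {Θ : F.Frame} (p : F.Pot Θ) (Λ : F.Frame) : F.Pot Λ :=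
  fun lam => ⨆ (θ : F.El Θ) (_ : F.compat θ lam), p θ

/-- combination of two set potentials, on the join of their domains -/
noncomputable def setCombine {Θ₁ Θ₂ : F.Frame} (m₁ : Set (F.El Θ₁) → ℝ≥0)
    (m₂ : Set (F.El Θ₂) → ℝ≥0) : Set (F.El (F.sup Θ₁ Θ₂)) → ℝ≥0 :=
  fun S => ∑ᶠ (S₁ : Set (F.El Θ₁)) (S₂ : Set (F.El Θ₂))
    (_ : (⋃ θ ∈ S₁, F.τ (F.le_sup_left Θ₁ Θ₂) θ) ∩
         (⋃ θ ∈ S₂, F.τ (F.le_sup_right Θ₁ Θ₂) θ) = S),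
    m₁ S₁ * m₂ S₂

/-- the conditional `p_{Θ|Λ} = π_Θ(p) · (π_Λ(p))⁻¹` of `p` for `Θ` given `Λ ≤ Θ` -/
noncomputable def condl {Δ : F.Frame} (p : F.Pot Δ) {Λ Θ : F.Frame} (h : F.le Λ Θ) :
    F.Pot Θ :=
  fun θ => F.transport p Θ θ * (F.transport p Λ (F.proj h θ))⁻¹

/-- the conditional `p_{Θ|Λ} = π_{Θ∨Λ}(p) · (π_Λ(p))⁻¹` of `p` for arbitrary `Θ` given `Λ` -/
noncomputable def condl2 {Δ : F.Frame} (p : F.Pot Δ) (Θ Λ : F.Frame) :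
    F.Pot (F.sup Θ Λ) :=
  fun x => F.transport p (F.sup Θ Λ) x *
    (F.transport p Λ (F.proj (F.le_sup_right Θ Λ) x))⁻¹

/-- the solution set `s_p^Λ(lam)`: maximizers of `p` among elements compatible with `lam` -/
noncomputable def solSet {Θ : F.Frame} (p : F.Pot Θ) (Λ : F.Frame) (lam : F.El Λ) :
    Set (F.El Θ) :=
  {θ | F.compat θ lam ∧ p θ = F.maxTransport p Λ lam}

end FCF

namespace FCF

/-- the vertex set `V_{v,w}` of the subtree containing `w` obtained by deleting `v` -/
def subtreeVerts {V : Type} (G : SimpleGraph V) (v w : V) : Set V :=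
  {u | ∃ p : G.Walk w u, v ∉ p.support}

theorem subtreeVerts_nonempty {V : Type} (G : SimpleGraph V) {v w : V}
    (h : G.Adj v w) : (subtreeVerts G v w).Nonempty := by
  refine ⟨w, SimpleGraph.Walk.nil, ?_⟩
  simpa using h.ne

/-- the join `Λ(U) = ⋁_{v ∈ U} Λ(v)` of the labels of a (finite, nonempty) set of nodes -/
noncomputable def setSup (F : FCF) {V : Type} [Finite V] (lab : V → F.Frame)
    (S : Set V) (hS : S.Nonempty) : F.Frame :=
  S.toFinite.toFinset.sup' (by simpa using hS) lab

/-- a labeled tree `(T, Λ)` is a Markov tree if for every node `v`,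
`⊥ {Λ(V_{v,w}) : w ∈ ne(v)} | Λ(v)`. -/
def IsMarkovTree (F : FCF) {V : Type} [Finite V] (G : SimpleGraph V)
    (lab : V → F.Frame) : Prop :=
  G.IsTree ∧ ∀ v : V, F.CondIndepFam
    (fun w : {w : V // G.Adj v w} =>
      F.setSup lab (subtreeVerts G v w.1) (subtreeVerts_nonempty G w.2))
    (lab v)

/-! A connected induced subgraph of a tree is a tree. For `v ∈ S`, distinct neighbours of `v` in
the subtree give distinct neighbours in the tree, and each branch of the subtree at `w` lies in
the branch of the tree at `w`, so its label is coarser. Conditional independence given `Λ(v)`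
survives passing to coarsenings of a subfamily: a family of coarse elements, each compatible with
`λ`, can be refined one branch at a time to fine elements compatible with `λ`, which are then
jointly compatible with `λ` by independence in the tree. -/

variable (F : FCF)

lemma eq_of_mem_τ {Θ Λ : F.Frame} (h : F.le Θ Λ) {θ θ' : F.El Θ} {x : F.El Λ}
    (hx : x ∈ F.τ h θ) (hx' : x ∈ F.τ h θ') : θ = θ' := by
  by_contra hne
  exact Set.notMem_empty x (F.τ_disjoint h θ θ' hne ▸ ⟨hx, hx'⟩)

lemma mem_τ_proj {Λ Θ : F.Frame} (h : F.le Λ Θ) (x : F.El Θ) : x ∈ F.τ h (F.proj h x) :=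
  (F.τ_cover h x).choose_spec

lemma mem_τ_trans {A B C : F.Frame} (hab : F.le A B) (hbc : F.le B C) (hac : F.le A C)
    {a : F.El A} {b : F.El B} {c : F.El C}
    (h₁ : b ∈ F.τ hab a) (h₂ : c ∈ F.τ hbc b) : c ∈ F.τ hac a := by
  rw [F.τ_comp hab hbc hac]
  exact Set.mem_biUnion h₁ h₂

lemma proj_mem_τ {A B C : F.Frame} (hab : F.le A B) (hbc : F.le B C) (hac : F.le A C)
    {a : F.El A} {c : F.El C} (hc : c ∈ F.τ hac a) : F.proj hbc c ∈ F.τ hab a := by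
  rw [F.τ_comp hab hbc hac] at hc
  obtain ⟨b, hb, hcb⟩ := Set.mem_iUnion₂.mp hc
  exact F.eq_of_mem_τ hbc hcb (F.mem_τ_proj hbc c) ▸ hb

lemma compat_iff_exists_mem_τ {Θ Λ Ξ : F.Frame} (hΘ : F.le Θ Ξ) (hΛ : F.le Λ Ξ)
    {θ : F.El Θ} {lam : F.El Λ} : F.compat θ lam ↔ ∃ x, x ∈ F.τ hΘ θ ∧ x ∈ F.τ hΛ lam := by
  have hs : F.le (F.sup Θ Λ) Ξ := F.sup_le hΘ hΛ
  constructor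
  · rintro ⟨y, hyθ, hylam⟩
    obtain ⟨x, hx⟩ := F.τ_nonempty hs y
    exact ⟨x, F.mem_τ_trans _ hs hΘ hyθ hx, F.mem_τ_trans _ hs hΛ hylam hx⟩
  · rintro ⟨x, hxθ, hxlam⟩
    exact ⟨F.proj hs x, F.proj_mem_τ _ hs hΘ hxθ, F.proj_mem_τ _ hs hΛ hxlam⟩

lemma exists_compat (Θ : F.Frame) {Λ : F.Frame} (lam : F.El Λ) :
    ∃ θ : F.El Θ, F.compat θ lam := by
  obtain ⟨x, hx⟩ := F.τ_nonempty (F.le_sup_right Θ Λ) lam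
  exact ⟨F.proj (F.le_sup_left Θ Λ) x, x, F.mem_τ_proj _ x, hx⟩

lemma exists_mem_τ_compat_of_compat {Λ' Θ Λ : F.Frame} (h : F.le Λ' Θ)
    {lam' : F.El Λ'} {lam : F.El Λ} (hc : F.compat lam' lam) :
    ∃ θ ∈ F.τ h lam', F.compat θ lam := by
  have hΘ := F.le_sup_left Θ Λ
  obtain ⟨x, hxlam', hxlam⟩ :=
    (F.compat_iff_exists_mem_τ (F.le_trans h hΘ) (F.le_sup_right Θ Λ)).mp hc
  exact ⟨F.proj hΘ x, F.proj_mem_τ h hΘ _ hxlam',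
    (F.compat_iff_exists_mem_τ hΘ (F.le_sup_right Θ Λ)).mpr ⟨x, F.mem_τ_proj hΘ x, hxlam⟩⟩

lemma compat_of_compatFam {ι : Type} {Θ : ι → F.Frame} {Λ : F.Frame}
    {θ : ∀ i, F.El (Θ i)} {lam : F.El Λ} (h : F.compatFam θ lam) (i : ι) :
    F.compat (θ i) lam := by
  obtain ⟨_, hΘ, hΛ, x, hxθ, hxlam⟩ := h
  exact (F.compat_iff_exists_mem_τ (hΘ i) hΛ).mpr ⟨x, hxθ i, hxlam⟩

variable {F} in
lemma CondIndepFam.mono {ι ι' : Type} {Θ : ι → F.Frame} {Θ' : ι' → F.Frame} {Λ : F.Frame}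
    (h : F.CondIndepFam Θ Λ) (e : ι' → ι) (he : Function.Injective e)
    (hle : ∀ i, F.le (Θ' i) (Θ (e i))) : F.CondIndepFam Θ' Λ := by
  refine fun lam θ' => ⟨fun hc => F.compat_of_compatFam hc, fun hc => ?_⟩
  have lift : ∀ j : ι, ∃ θ : F.El (Θ j), F.compat θ lam ∧
      ∀ i, e i = j → ∃ hij : F.le (Θ' i) (Θ j), θ ∈ F.τ hij (θ' i) := by
    intro j
    by_cases hj : ∃ i, e i = j
    · obtain ⟨i, rfl⟩ := hj
      obtain ⟨θ, hθ, hθlam⟩ := F.exists_mem_τ_compat_of_compat (hle i) (hc i)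
      refine ⟨θ, hθlam, fun i' hi' => ?_⟩
      cases he hi'
      exact ⟨hle i, hθ⟩
    · obtain ⟨θ, hθlam⟩ := F.exists_compat (Θ j) lam
      exact ⟨θ, hθlam, fun i hi => absurd ⟨i, hi⟩ hj⟩
  choose θ hθlam hθ using lift
  obtain ⟨Ξ, hΘΞ, hΛΞ, x, hxθ, hxlam⟩ := (h lam θ).mpr hθlam
  refine ⟨Ξ, fun i => F.le_trans (hle i) (hΘΞ (e i)), hΛΞ, x, fun i => ?_, hxlam⟩
  obtain ⟨hij, hmem⟩ := hθ (e i) i rfl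
  exact F.mem_τ_trans hij (hΘΞ (e i)) _ hmem (hxθ (e i))

lemma setSup_le_setSup_of_mapsTo {W V : Type} [Finite W] [Finite V] (lab : V → F.Frame)
    (f : W → V) {S : Set W} {T : Set V} (hS : S.Nonempty) (hT : T.Nonempty)
    (hST : Set.MapsTo f S T) : F.setSup (lab ∘ f) S hS ≤ F.setSup lab T hT :=
  Finset.sup'_le _ _ fun _ hu =>
    Finset.le_sup' lab ((Set.Finite.mem_toFinset _).mpr (hST ((Set.Finite.mem_toFinset _).mp hu)))

lemma mapsTo_subtreeVerts_induce {V : Type} (G : SimpleGraph V) (S : Set V) (v w : S) :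
    Set.MapsTo Subtype.val (subtreeVerts (G.induce S) v w) (subtreeVerts G v w) := by
  rintro _ ⟨p, hp⟩
  refine ⟨p.map (SimpleGraph.Embedding.induce S).toHom, fun hv => hp ?_⟩
  erw [SimpleGraph.Walk.support_map, List.mem_map] at hv
  obtain ⟨x, hx, hxv⟩ := hv
  exact Subtype.ext hxv ▸ hx

/-- Every connected subgraph of a Markov tree, with the inherited
labeling, is itself a Markov tree. -/
theorem isMarkovTree_induce (F : FCF) {V : Type} [Finite V] (G : SimpleGraph V)
    (lab : V → F.Frame) (hT : F.IsMarkovTree G lab)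
    (S : Set V) (hconn : (G.induce S).Connected) :
    F.IsMarkovTree (G.induce S) (fun v => lab v.1) := by
  obtain ⟨hTree, hCI⟩ := hT
  refine ⟨⟨hconn, hTree.isAcyclic.induce S⟩, fun v => (hCI v).mono
    (fun w => ⟨w.1.1, w.2⟩) (fun a b hab => ?_) fun w => ?_⟩
  · exact Subtype.ext (Subtype.ext (Subtype.mk.inj hab))
  · exact F.setSup_le_setSup_of_mapsTo lab Subtype.val _ _
      (mapsTo_subtreeVerts_induce G S v w.1)

end FCF
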